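/- arXiv:2102.00810 — 2 statements merged into one kernel-verified Lean document; each statement's English description precedes it below -/
import Mathlib

section
/- Let τ > 0, L ≥ L_F and r > 0, and suppose x ∈ ℱ and T_{L,τ}(x) ∈ ℱ. Then τ/2 + f₂(x)/(2τ) − f₁(T_{L,τ}(x)) ≥ L·r²·κ( Δ_r(x)/(2τ·L·r²) ). (Lemma 3: decrease of the residual measured by the local model increment.) -/
/-- The regularized local model `ψ_{x,L,τ}(y)`. -/
noncomputable def psi {n m : ℕ}
    (F : EuclideanSpace ℝ (Fin n) → EuclideanSpace ℝ (Fin m))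
    (F' : EuclideanSpace ℝ (Fin n) →
      EuclideanSpace ℝ (Fin n) →L[ℝ] EuclideanSpace ℝ (Fin m))
    (x : EuclideanSpace ℝ (Fin n)) (L τ : ℝ) (y : EuclideanSpace ℝ (Fin n)) : ℝ :=
  τ / 2 + ‖F x + F' x (y - x)‖ ^ 2 / (2 * τ) + L / 2 * ‖y - x‖ ^ 2

/-- `κ(t) = t²/2` for `0 ≤ t ≤ 1`, `κ(t) = t − 1/2` for `t > 1`. -/
noncomputable def kappa (t : ℝ) : ℝ := if t ≤ 1 then t ^ 2 / 2 else t - 1 / 2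

/-- `Δ_r(x) = f₂(x) − inf {φ(x,y)² : ‖y − x‖ ≤ r}`. -/
noncomputable def Delta {n m : ℕ}
    (F : EuclideanSpace ℝ (Fin n) → EuclideanSpace ℝ (Fin m))
    (F' : EuclideanSpace ℝ (Fin n) →
      EuclideanSpace ℝ (Fin n) →L[ℝ] EuclideanSpace ℝ (Fin m))
    (r : ℝ) (x : EuclideanSpace ℝ (Fin n)) : ℝ :=
  ‖F x‖ ^ 2 - sInf ((fun y => ‖F x + F' x (y - x)‖ ^ 2) '' Metric.closedBall x r)

/-!
Moving from `x` towards any `y` with `‖y - x‖ ≤ r` by a step `α ∈ [0, 1]`, convexity of `‖·‖²`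
bounds the model by `ψ(x + α(y - x)) ≤ ψ(x) - α(f₂(x) - φ(x,y)²)/(2τ) + Lα²r²/2`. Since `T`
minimizes `ψ`, this gives `ψ(x) - ψ(T) ≥ αΔ_r(x)/(2τ) - Lr²α²/2` for every `α ∈ [0, 1]`, and
the maximum of the right-hand side over `α` is `Lr²κ(Δ_r(x)/(2τLr²))`. Finally
`ψ(x) = τ/2 + f₂(x)/(2τ)`, while `f₁(T) ≤ ψ(T)` by the quadratic Taylor bound for a Lipschitz
derivative and `φ ≤ τ/2 + φ²/(2τ)`.
-/

open Set

theorem Convex.norm_image_sub_sub_fderiv_le {E G : Type*} [NormedAddCommGroup E]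
    [NormedSpace ℝ E] [NormedAddCommGroup G] [NormedSpace ℝ G] {f : E → G} {f' : E → E →L[ℝ] G}
    {s : Set E} {K : ℝ} {x y : E} (hs : Convex ℝ s) (hf : ∀ z ∈ s, HasFDerivAt f (f' z) z)
    (hK : ∀ z ∈ s, ‖f' z - f' x‖ ≤ K * ‖z - x‖) (hx : x ∈ s) (hy : y ∈ s) :
    ‖f y - f x - f' x (y - x)‖ ≤ K / 2 * ‖y - x‖ ^ 2 := by
  set v := y - x
  have hseg : ∀ t ∈ Icc (0 : ℝ) 1, x + t • v ∈ s := fun t ht => hs.add_smul_sub_mem hx hy ht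
  have hderiv : ∀ t ∈ Icc (0 : ℝ) 1, HasDerivAt (fun t : ℝ => f (x + t • v) - f x - t • f' x v)
      (f' (x + t • v) v - f' x v) t := by
    intro t ht
    have hline : HasDerivAt (fun t : ℝ => x + t • v) v t := by
      simpa using ((hasDerivAt_id t).smul_const v).const_add x
    exact (((hf _ (hseg t ht)).comp_hasDerivAt t hline).sub_const (f x)).sub
      (by simpa using (hasDerivAt_id t).smul_const (f' x v))
  have hbound : ∀ t ∈ Ico (0 : ℝ) 1,
      ‖f' (x + t • v) v - f' x v‖ ≤ K * ‖v‖ ^ 2 / 2 * (2 * t ^ 1) := by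
    intro t ht
    calc ‖f' (x + t • v) v - f' x v‖ ≤ ‖f' (x + t • v) - f' x‖ * ‖v‖ :=
          (f' (x + t • v) - f' x).le_opNorm v
      _ ≤ K * ‖t • v‖ * ‖v‖ := by
          gcongr
          simpa using hK _ (hseg t (Ico_subset_Icc_self ht))
      _ = K * ‖v‖ ^ 2 / 2 * (2 * t ^ 1) := by
          rw [norm_smul, Real.norm_of_nonneg ht.1]; ring
  have key := image_norm_le_of_norm_deriv_right_le_deriv_boundary
    (fun t ht => (hderiv t ht).continuousAt.continuousWithinAt)
    (fun t ht => (hderiv t (Ico_subset_Icc_self ht)).hasDerivWithinAt) (by simp)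
    (fun t => (hasDerivAt_pow 2 t).const_mul (K * ‖v‖ ^ 2 / 2)) hbound
    (right_mem_Icc.2 zero_le_one)
  simpa [v, mul_div_right_comm K] using key

theorem mul_kappa_div_le {c D G : ℝ} (hc : 0 < c) (hD : 0 ≤ D)
    (h : ∀ α ∈ Icc (0 : ℝ) 1, α * D - c * α ^ 2 / 2 ≤ G) : c * kappa (D / c) ≤ G := by
  obtain ⟨t, rfl⟩ : ∃ t, D = c * t := ⟨D / c, (mul_div_cancel₀ D hc.ne').symm⟩
  rw [mul_div_cancel_left₀ t hc.ne', kappa]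
  split_ifs with ht
  · have := h t ⟨nonneg_of_mul_nonneg_right hD hc, ht⟩
    linarith
  · have := h 1 ⟨zero_le_one, le_rfl⟩
    linarith

section LocalModel

variable {n m : ℕ} {F : EuclideanSpace ℝ (Fin n) → EuclideanSpace ℝ (Fin m)}
  {F' : EuclideanSpace ℝ (Fin n) → EuclideanSpace ℝ (Fin n) →L[ℝ] EuclideanSpace ℝ (Fin m)}
  {x : EuclideanSpace ℝ (Fin n)} {L τ : ℝ}

theorem psi_self : psi F F' x L τ x = τ / 2 + ‖F x‖ ^ 2 / (2 * τ) := by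
  simp [psi]

theorem norm_le_psi {s : Set (EuclideanSpace ℝ (Fin n))} {LF : ℝ} {y : EuclideanSpace ℝ (Fin n)}
    (hs : Convex ℝ s) (hF : ∀ z ∈ s, HasFDerivAt F (F' z) z)
    (hLip : ∀ z ∈ s, ‖F' z - F' x‖ ≤ LF * ‖z - x‖) (hx : x ∈ s) (hy : y ∈ s)
    (hτ : 0 < τ) (hL : LF ≤ L) : ‖F y‖ ≤ psi F F' x L τ y := by
  set φ := ‖F x + F' x (y - x)‖
  have htaylor : ‖F y‖ ≤ φ + LF / 2 * ‖y - x‖ ^ 2 :=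
    calc ‖F y‖ = ‖(F x + F' x (y - x)) + (F y - F x - F' x (y - x))‖ := by congr 1; abel
      _ ≤ φ + ‖F y - F x - F' x (y - x)‖ := norm_add_le _ _
      _ ≤ φ + LF / 2 * ‖y - x‖ ^ 2 := by
          gcongr; exact hs.norm_image_sub_sub_fderiv_le hF hLip hx hy
  have hamgm : φ ≤ τ / 2 + φ ^ 2 / (2 * τ) := by
    have hsq : 0 ≤ (φ - τ) ^ 2 / (2 * τ) := by positivity
    have hgap : τ / 2 + φ ^ 2 / (2 * τ) - φ = (φ - τ) ^ 2 / (2 * τ) := by field_simp; ring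
    linarith
  have hLF : LF / 2 * ‖y - x‖ ^ 2 ≤ L / 2 * ‖y - x‖ ^ 2 := by gcongr
  unfold psi
  linarith

theorem psi_add_smul_sub_le {r α : ℝ} {y : EuclideanSpace ℝ (Fin n)} (hτ : 0 < τ) (hL : 0 ≤ L)
    (hy : ‖y - x‖ ≤ r) (hα : α ∈ Icc (0 : ℝ) 1) :
    psi F F' x L τ (x + α • (y - x)) ≤
      psi F F' x L τ x - α * (‖F x‖ ^ 2 - ‖F x + F' x (y - x)‖ ^ 2) / (2 * τ)
        + L * α ^ 2 * r ^ 2 / 2 := by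
  have hlin : F x + F' x (α • (y - x)) = (1 - α) • F x + α • (F x + F' x (y - x)) := by
    rw [map_smul]; module
  have hconv : ‖F x + F' x (α • (y - x))‖ ^ 2
      ≤ (1 - α) * ‖F x‖ ^ 2 + α * ‖F x + F' x (y - x)‖ ^ 2 := by
    rw [hlin]
    exact (convexOn_univ_norm.pow (fun _ _ => norm_nonneg _) 2).2 (mem_univ _) (mem_univ _)
      (sub_nonneg.2 hα.2) hα.1 (by ring)
  have hstep : ‖α • (y - x)‖ ^ 2 ≤ α ^ 2 * r ^ 2 := by
    rw [norm_smul, Real.norm_of_nonneg hα.1, mul_pow]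
    gcongr
  rw [psi_self]
  unfold psi
  rw [add_sub_cancel_left]
  have hresidual : ‖F x + F' x (α • (y - x))‖ ^ 2 / (2 * τ)
      ≤ ((1 - α) * ‖F x‖ ^ 2 + α * ‖F x + F' x (y - x)‖ ^ 2) / (2 * τ) := by gcongr
  have hprox : L / 2 * ‖α • (y - x)‖ ^ 2 ≤ L / 2 * (α ^ 2 * r ^ 2) := by gcongr
  have hsplit : ((1 - α) * ‖F x‖ ^ 2 + α * ‖F x + F' x (y - x)‖ ^ 2) / (2 * τ)
      = ‖F x‖ ^ 2 / (2 * τ) - α * (‖F x‖ ^ 2 - ‖F x + F' x (y - x)‖ ^ 2) / (2 * τ) := by ring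
  linarith

theorem Delta_nonneg {r : ℝ} (hr : 0 ≤ r) : 0 ≤ Delta F F' r x := by
  have hbdd : BddBelow ((fun y => ‖F x + F' x (y - x)‖ ^ 2) '' Metric.closedBall x r) :=
    ⟨0, by rintro _ ⟨y, _, rfl⟩; positivity⟩
  have := csInf_le hbdd ⟨x, Metric.mem_closedBall_self hr, rfl⟩
  simp only [sub_self, map_zero, add_zero] at this
  exact sub_nonneg.2 this

theorem mul_Delta_le {r α M : ℝ} (hr : 0 ≤ r) (hα : 0 ≤ α)
    (h : ∀ y ∈ Metric.closedBall x r, α * (‖F x‖ ^ 2 - ‖F x + F' x (y - x)‖ ^ 2) ≤ M) :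
    α * Delta F F' r x ≤ M := by
  rcases hα.eq_or_lt with rfl | hα
  · simpa using h x (Metric.mem_closedBall_self hr)
  rw [← le_div_iff₀' hα, Delta, sub_le_comm]
  refine le_csInf ⟨_, x, Metric.mem_closedBall_self hr, rfl⟩ ?_
  rintro _ ⟨y, hy, rfl⟩
  have := h y hy
  rw [sub_le_comm, ← mul_le_mul_iff_of_pos_left hα, mul_sub, mul_div_cancel₀ _ hα.ne']
  linarith

end LocalModel

theorem decrease_by_model_increment_general
    {n m : ℕ}
    (F : EuclideanSpace ℝ (Fin n) → EuclideanSpace ℝ (Fin m))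
    (F' : EuclideanSpace ℝ (Fin n) →
      EuclideanSpace ℝ (Fin n) →L[ℝ] EuclideanSpace ℝ (Fin m))
    (hF : ∀ x, HasFDerivAt F (F' x) x)
    (𝓕 : Set (EuclideanSpace ℝ (Fin n)))
    (h𝓕conv : Convex ℝ 𝓕)
    (LF : ℝ) (hLF : 0 < LF)
    (hLip : ∀ x ∈ 𝓕, ∀ y ∈ 𝓕, ‖F' y - F' x‖ ≤ LF * ‖y - x‖)
    (x : EuclideanSpace ℝ (Fin n)) (hx : x ∈ 𝓕)
    (L τ r : ℝ) (hτ : 0 < τ) (hL : LF ≤ L) (hr : 0 < r)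
    (T : EuclideanSpace ℝ (Fin n))
    (hTmin : ∀ y, psi F F' x L τ T ≤ psi F F' x L τ y)
    (hT : T ∈ 𝓕) :
    L * r ^ 2 * kappa (Delta F F' r x / (2 * τ * L * r ^ 2))
      ≤ τ / 2 + ‖F x‖ ^ 2 / (2 * τ) - ‖F T‖ := by
  have hLpos : 0 < L := hLF.trans_le hL
  have hnorm : ‖F T‖ ≤ psi F F' x L τ T :=
    norm_le_psi h𝓕conv (fun z _ => hF z) (fun z hz => hLip x hx z hz) hx hT hτ hL
  have hincr : ∀ α ∈ Icc (0 : ℝ) 1,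
      α * (Delta F F' r x / (2 * τ)) - L * r ^ 2 * α ^ 2 / 2
        ≤ τ / 2 + ‖F x‖ ^ 2 / (2 * τ) - ‖F T‖ := by
    intro α hα
    have hΔ : α * Delta F F' r x ≤
        2 * τ * (psi F F' x L τ x - psi F F' x L τ T + L * α ^ 2 * r ^ 2 / 2) := by
      refine mul_Delta_le hr.le hα.1 fun y hy => ?_
      have := (hTmin _).trans
        (psi_add_smul_sub_le hτ hLpos.le (mem_closedBall_iff_norm.1 hy) hα)
      rw [← div_le_iff₀' (by positivity)]
      linarith
    have := (div_le_iff₀' (by positivity)).2 hΔ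
    rw [psi_self] at this
    rw [← mul_div_assoc]
    linarith
  rw [mul_assoc (2 * τ), ← div_div]
  exact mul_kappa_div_le (by positivity) (div_nonneg (Delta_nonneg hr.le) (by positivity)) hincr

/-- **Lemma 3.** Decrease of the residual measured by the local model increment:
`τ/2 + f₂(x)/(2τ) − f₁(T_{L,τ}(x)) ≥ L r² κ(Δ_r(x)/(2τLr²))`. -/
theorem decrease_by_model_increment
    {n m : ℕ}
    (F : EuclideanSpace ℝ (Fin n) → EuclideanSpace ℝ (Fin m))
    (F' : EuclideanSpace ℝ (Fin n) →
      EuclideanSpace ℝ (Fin n) →L[ℝ] EuclideanSpace ℝ (Fin m))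
    (hF : ∀ x, HasFDerivAt F (F' x) x)
    (𝓕 : Set (EuclideanSpace ℝ (Fin n)))
    (h𝓕closed : IsClosed 𝓕) (h𝓕conv : Convex ℝ 𝓕)
    (LF : ℝ) (hLF : 0 < LF)
    (hLip : ∀ x ∈ 𝓕, ∀ y ∈ 𝓕, ‖F' y - F' x‖ ≤ LF * ‖y - x‖)
    (x : EuclideanSpace ℝ (Fin n)) (hx : x ∈ 𝓕)
    (L τ r : ℝ) (hτ : 0 < τ) (hL : LF ≤ L) (hr : 0 < r)
    (T : EuclideanSpace ℝ (Fin n))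
    (hTmin : ∀ y, psi F F' x L τ T ≤ psi F F' x L τ y)
    (hT : T ∈ 𝓕) :
    L * r ^ 2 * kappa (Delta F F' r x / (2 * τ * L * r ^ 2))
      ≤ τ / 2 + ‖F x‖ ^ 2 / (2 * τ) - ‖F T‖ :=
  decrease_by_model_increment_general F F' hF 𝓕 h𝓕conv LF hLF hLip x hx L τ r hτ hL hr T hTmin hT
end

section
/- Let k ≥ 1 be an integer, and let points x₀, …, x_k ∈ E₁ and numbers τ_i > 0, L_i ∈ (0, 2L_F], η_i ∈ ℝ (0 ≤ i < k) satisfy, for all 0 ≤ i < k: x_{i+1} = x_i − η_i·(F̂'(x_i)*F̂'(x_i) + τ_iL_i·I)⁻¹F̂'(x_i)*F̂(x_i) and f₁(x_{i+1}) ≤ ψ_{x_i,L_i,τ_i}(x_{i+1}). Let η ∈ (0,2) satisfy η(2−η) ≤ η_i(2−η_i) for all 0 ≤ i < k. Then min_{0≤i<k} ‖∇f₂(x_i)‖² ≤ ( 8·(2L_F·max_{0≤i<k} τ_i + M_F²) / (η(2−η)·k) )·Σ_{i=0}^{k−1} ( (τ_i − f₁(x_i))²/2 + τ_i·(f₁(x_i)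 − f₁(x_{i+1})) ). (Theorem 6: gradient convergence for the explicitly scaled Gauss–Newton step.) -/
open ContinuousLinearMap RealInnerProductSpace

section RegularizedNormalEquation

variable {E G : Type*} [NormedAddCommGroup E] [InnerProductSpace ℝ E] [CompleteSpace E]
  [NormedAddCommGroup G] [InnerProductSpace ℝ G] [CompleteSpace G]

lemma inner_apply_eq_of_adjoint_apply_add_smul_eq {A : E →L[ℝ] G} {g : G} {d : E} {c : ℝ}
    (hd : adjoint A (A d) + c • d = adjoint A g) :
    ⟪g, A d⟫ = ‖A d‖ ^ 2 + c * ‖d‖ ^ 2 := by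
  have := congrArg (fun v => ⟪v, d⟫) hd
  simp only [inner_add_left, real_inner_smul_left, adjoint_inner_left,
    real_inner_self_eq_norm_sq] at this
  exact this.symm

lemma norm_adjoint_apply_add_smul_sq_le (A : E →L[ℝ] G) (d : E) {c : ℝ} (hc : 0 ≤ c) :
    ‖adjoint A (A d) + c • d‖ ^ 2 ≤ (‖A‖ ^ 2 + c) * (‖A d‖ ^ 2 + c * ‖d‖ ^ 2) := by
  have hAA : ‖adjoint A (A d)‖ ≤ ‖A‖ * ‖A d‖ := by
    simpa only [LinearIsometryEquiv.norm_map] using (adjoint A).le_opNorm (A d)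
  have hAd : ‖A d‖ ≤ ‖A‖ * ‖d‖ := A.le_opNorm d
  have hexpand : ‖adjoint A (A d) + c • d‖ ^ 2
      = ‖adjoint A (A d)‖ ^ 2 + 2 * c * ‖A d‖ ^ 2 + c ^ 2 * ‖d‖ ^ 2 := by
    rw [norm_add_sq_real, real_inner_smul_right, adjoint_inner_left,
      real_inner_self_eq_norm_sq, norm_smul, Real.norm_eq_abs, mul_pow, sq_abs]
    ring
  have hAA_sq : ‖adjoint A (A d)‖ ^ 2 ≤ ‖A‖ ^ 2 * ‖A d‖ ^ 2 := by
    rw [← mul_pow]; exact pow_le_pow_left₀ (norm_nonneg _) hAA 2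
  have hAd_sq : ‖A d‖ ^ 2 ≤ ‖A‖ ^ 2 * ‖d‖ ^ 2 := by
    rw [← mul_pow]; exact pow_le_pow_left₀ (norm_nonneg _) hAd 2
  rw [hexpand]
  nlinarith [mul_le_mul_of_nonneg_left hAd_sq hc]

lemma mul_two_sub_mul_le_of_le_model {A : E →L[ℝ] G} {g : G} {d : E} {τ L t η f' : ℝ}
    (hτ : 0 < τ) (hL : 0 ≤ L) (hd : adjoint A (A d) + (τ * L) • d = adjoint A g)
    (hf' : f' ≤ τ / 2 + ‖g - t • A d‖ ^ 2 / (2 * τ) + L / 2 * ‖t • d‖ ^ 2)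
    (hηt : η * (2 - η) ≤ t * (2 - t)) :
    η * (2 - η) * (‖A d‖ ^ 2 + τ * L * ‖d‖ ^ 2)
      ≤ (τ - ‖g‖) ^ 2 + 2 * τ * (‖g‖ - f') := by
  set q := ‖A d‖ ^ 2 + τ * L * ‖d‖ ^ 2
  have hq : 0 ≤ q := by positivity
  have hmodel : 2 * τ * (τ / 2 + ‖g - t • A d‖ ^ 2 / (2 * τ) + L / 2 * ‖t • d‖ ^ 2)
      = τ ^ 2 + ‖g‖ ^ 2 - t * (2 - t) * q := by
    rw [norm_sub_sq_real, real_inner_smul_right, inner_apply_eq_of_adjoint_apply_add_smul_eq hd,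
      norm_smul, norm_smul, Real.norm_eq_abs, mul_pow, mul_pow, sq_abs]
    field_simp
    ring
  have hdecrease : 2 * τ * f' ≤ τ ^ 2 + ‖g‖ ^ 2 - t * (2 - t) * q := by
    rw [← hmodel]; exact mul_le_mul_of_nonneg_left hf' (by positivity)
  nlinarith [mul_le_mul_of_nonneg_right hηt hq]

lemma norm_adjoint_sq_le_of_le_model {A : E →L[ℝ] G} {g : G} {d : E} {τ L t η f' C : ℝ}
    (hτ : 0 < τ) (hL : 0 ≤ L) (hC : ‖A‖ ^ 2 + τ * L ≤ C) (hη : 0 < η * (2 - η))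
    (hd : adjoint A (A d) + (τ * L) • d = adjoint A g)
    (hf' : f' ≤ τ / 2 + ‖g - t • A d‖ ^ 2 / (2 * τ) + L / 2 * ‖t • d‖ ^ 2)
    (hηt : η * (2 - η) ≤ t * (2 - t)) :
    ‖adjoint A g‖ ^ 2 ≤ C / (η * (2 - η)) * ((τ - ‖g‖) ^ 2 + 2 * τ * (‖g‖ - f')) := by
  have hc : 0 ≤ τ * L := by positivity
  have hq : 0 ≤ ‖A d‖ ^ 2 + τ * L * ‖d‖ ^ 2 := by positivity
  have hgrad : ‖adjoint A g‖ ^ 2 ≤ C * (‖A d‖ ^ 2 + τ * L * ‖d‖ ^ 2) := by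
    rw [← hd]
    exact (norm_adjoint_apply_add_smul_sq_le A d hc).trans (mul_le_mul_of_nonneg_right hC hq)
  have hC0 : 0 ≤ C := le_trans (by positivity) hC
  rw [div_mul_eq_mul_div, le_div_iff₀ hη]
  calc ‖adjoint A g‖ ^ 2 * (η * (2 - η))
      ≤ C * (‖A d‖ ^ 2 + τ * L * ‖d‖ ^ 2) * (η * (2 - η)) :=
        mul_le_mul_of_nonneg_right hgrad hη.le
    _ = C * (η * (2 - η) * (‖A d‖ ^ 2 + τ * L * ‖d‖ ^ 2)) := by ring
    _ ≤ C * ((τ - ‖g‖) ^ 2 + 2 * τ * (‖g‖ - f')) :=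
        mul_le_mul_of_nonneg_left (mul_two_sub_mul_le_of_le_model hτ hL hd hf' hηt) hC0

end RegularizedNormalEquation

lemma psi_sub_smul {n m : ℕ} (F : EuclideanSpace ℝ (Fin n) → EuclideanSpace ℝ (Fin m))
    (F' : EuclideanSpace ℝ (Fin n) → EuclideanSpace ℝ (Fin n) →L[ℝ] EuclideanSpace ℝ (Fin m))
    (x d : EuclideanSpace ℝ (Fin n)) (L τ t : ℝ) :
    psi F F' x L τ (x - t • d)
      = τ / 2 + ‖F x - t • F' x d‖ ^ 2 / (2 * τ) + L / 2 * ‖t • d‖ ^ 2 := by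
  rw [psi, sub_sub_cancel_left, map_neg, map_smul, ← sub_eq_add_neg, norm_neg]

lemma Finset.inf'_le_div_card_mul_sum {ι : Type*} {s : Finset ι} (hs : s.Nonempty)
    {f g : ι → ℝ} {a : ℝ} (h : ∀ i ∈ s, f i ≤ a * g i) :
    s.inf' hs f ≤ a / s.card * ∑ i ∈ s, g i := by
  have hcard : (0 : ℝ) < s.card := by exact_mod_cast hs.card_pos
  rw [div_mul_eq_mul_div, le_div_iff₀ hcard, mul_comm, ← nsmul_eq_mul, Finset.mul_sum]
  exact (s.card_nsmul_le_sum f _ fun i hi => s.inf'_le f hi).trans (Finset.sum_le_sum h)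

theorem gradient_convergence_scaled_step_general
    {n m : ℕ}
    (F : EuclideanSpace ℝ (Fin n) → EuclideanSpace ℝ (Fin m))
    (F' : EuclideanSpace ℝ (Fin n) →
      EuclideanSpace ℝ (Fin n) →L[ℝ] EuclideanSpace ℝ (Fin m))
    (LF : ℝ)
    (MF : ℝ) (hMFb : ∀ x, ‖F' x‖ ≤ MF)
    (k : ℕ) (hk : 1 ≤ k)
    (x : ℕ → EuclideanSpace ℝ (Fin n))
    (τk Lk ηk : ℕ → ℝ) (d : ℕ → EuclideanSpace ℝ (Fin n))
    (hτk : ∀ i < k, 0 < τk i)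
    (hLk : ∀ i < k, 0 < Lk i ∧ Lk i ≤ 2 * LF)
    (hd : ∀ i < k, (ContinuousLinearMap.adjoint (F' (x i))) (F' (x i) (d i))
        + (τk i * Lk i) • d i = (ContinuousLinearMap.adjoint (F' (x i))) (F (x i)))
    (hstep : ∀ i < k, x (i + 1) = x i - ηk i • d i)
    (hub : ∀ i < k, ‖F (x (i + 1))‖ ≤ psi F F' (x i) (Lk i) (τk i) (x (i + 1)))
    (η : ℝ) (hη : η ∈ Set.Ioo (0 : ℝ) 2)
    (hηk : ∀ i < k, η * (2 - η) ≤ ηk i * (2 - ηk i)) :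
    (Finset.range k).inf' (Finset.nonempty_range_iff.mpr (Nat.one_le_iff_ne_zero.mp hk))
        (fun i => ‖(2 : ℝ) • (ContinuousLinearMap.adjoint (F' (x i))) (F (x i))‖ ^ 2)
      ≤ 8 * (2 * LF * (Finset.range k).sup'
              (Finset.nonempty_range_iff.mpr (Nat.one_le_iff_ne_zero.mp hk)) τk + MF ^ 2)
          / (η * (2 - η) * (k : ℝ))
        * ∑ i ∈ Finset.range k,
            ((τk i - ‖F (x i)‖) ^ 2 / 2 + τk i * (‖F (x i)‖ - ‖F (x (i + 1))‖)) := by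
  have hne := Finset.nonempty_range_iff.mpr (Nat.one_le_iff_ne_zero.mp hk)
  set C := 2 * LF * (Finset.range k).sup' hne τk + MF ^ 2
  have hη : 0 < η * (2 - η) := mul_pos hη.1 (sub_pos.mpr hη.2)
  have hbound : ∀ i ∈ Finset.range k,
      ‖(2 : ℝ) • adjoint (F' (x i)) (F (x i))‖ ^ 2 ≤ 8 * C / (η * (2 - η))
        * ((τk i - ‖F (x i)‖) ^ 2 / 2 + τk i * (‖F (x i)‖ - ‖F (x (i + 1))‖)) := by
    intro i hi
    have hik := Finset.mem_range.mp hi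
    obtain ⟨hL, hLF⟩ := hLk i hik
    have hC : ‖F' (x i)‖ ^ 2 + τk i * Lk i ≤ C := by
      have hτ_le : τk i ≤ (Finset.range k).sup' hne τk := Finset.le_sup' τk hi
      have hτL : τk i * Lk i ≤ (Finset.range k).sup' hne τk * (2 * LF) :=
        mul_le_mul hτ_le hLF hL.le ((hτk i hik).le.trans hτ_le)
      have hA : ‖F' (x i)‖ ^ 2 ≤ MF ^ 2 := pow_le_pow_left₀ (norm_nonneg _) (hMFb (x i)) 2
      linarith
    have hmodel := hub i hik
    rw [hstep i hik] at hmodel ⊢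
    rw [psi_sub_smul] at hmodel
    have hgrad := norm_adjoint_sq_le_of_le_model (hτk i hik) hL.le hC hη (hd i hik) hmodel
      (hηk i hik)
    rw [norm_smul, mul_pow, Real.norm_two]
    exact (mul_le_mul_of_nonneg_left hgrad (by norm_num)).trans_eq (by ring)
  calc _ ≤ _ := Finset.inf'_le_div_card_mul_sum hne hbound
    _ = _ := by rw [Finset.card_range, div_div]

/-- **Theorem 6.** Gradient convergence for the explicitly scaled Gauss–Newton step;
`∇f₂(x) = 2 F̂'(x)* F̂(x)`, the step being `x_{i+1} = x_i − η_i (F̂'(x_i)*F̂'(x_i) + τ_iL_i I)⁻¹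
F̂'(x_i)* F̂(x_i)` (encoded by vectors `d i`). -/
theorem gradient_convergence_scaled_step
    {n m : ℕ}
    (F : EuclideanSpace ℝ (Fin n) → EuclideanSpace ℝ (Fin m))
    (F' : EuclideanSpace ℝ (Fin n) →
      EuclideanSpace ℝ (Fin n) →L[ℝ] EuclideanSpace ℝ (Fin m))
    (hF : ∀ x, HasFDerivAt F (F' x) x)
    (LF : ℝ) (hLF : 0 < LF)
    (hLip : ∀ x y, ‖F' y - F' x‖ ≤ LF * ‖y - x‖)
    (MF : ℝ) (hMF : 0 < MF) (hMFb : ∀ x, ‖F' x‖ ≤ MF)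
    (k : ℕ) (hk : 1 ≤ k)
    (x : ℕ → EuclideanSpace ℝ (Fin n))
    (τk Lk ηk : ℕ → ℝ) (d : ℕ → EuclideanSpace ℝ (Fin n))
    (hτk : ∀ i < k, 0 < τk i)
    (hLk : ∀ i < k, 0 < Lk i ∧ Lk i ≤ 2 * LF)
    (hd : ∀ i < k, (ContinuousLinearMap.adjoint (F' (x i))) (F' (x i) (d i))
        + (τk i * Lk i) • d i = (ContinuousLinearMap.adjoint (F' (x i))) (F (x i)))
    (hstep : ∀ i < k, x (i + 1) = x i - ηk i • d i)
    (hub : ∀ i < k, ‖F (x (i + 1))‖ ≤ psi F F' (x i) (Lk i) (τk i) (x (i + 1)))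
    (η : ℝ) (hη : η ∈ Set.Ioo (0 : ℝ) 2)
    (hηk : ∀ i < k, η * (2 - η) ≤ ηk i * (2 - ηk i)) :
    (Finset.range k).inf' (Finset.nonempty_range_iff.mpr (Nat.one_le_iff_ne_zero.mp hk))
        (fun i => ‖(2 : ℝ) • (ContinuousLinearMap.adjoint (F' (x i))) (F (x i))‖ ^ 2)
      ≤ 8 * (2 * LF * (Finset.range k).sup'
              (Finset.nonempty_range_iff.mpr (Nat.one_le_iff_ne_zero.mp hk)) τk + MF ^ 2)
          / (η * (2 - η) * (k : ℝ))
        * ∑ i ∈ Finset.range k,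
            ((τk i - ‖F (x i)‖) ^ 2 / 2 + τk i * (‖F (x i)‖ - ‖F (x (i + 1))‖)) :=
  gradient_convergence_scaled_step_general F F' LF MF hMFb k hk x τk Lk ηk d hτk hLk hd hstep hub η
    hη hηk
end
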